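/- The function g(q) = 8(2E(q) − K(q))²(2q² − 1) is strictly monotone on each of the intervals (1/√2, q̂], [q̂, q*], and [q*, 1): strictly increasing on (1/√2, q̂], strictly decreasing on [q̂, q*], and strictly increasing on [q*, 1), where q̂ is the unique zero of f in (1/√2, q*) and q* is the unique zero of 2E − K; in particular g has a local maximum at q̂ and local minimum value g(q*) = 0. -/

import Mathlib

open Real Set Filter

noncomputable def Kc (q : ℝ) : ℝ := ∫ θ in (0:ℝ)..(π/2), 1 / Real.sqrt (1 - q^2 * Real.sin θ^2)

noncomputable def Ec (q : ℝ) : ℝ := ∫ θ in (0:ℝ)..(π/2), Real.sqrt (1 - q^2 * Real.sin θ^2)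

noncomputable def fc (q : ℝ) : ℝ := (4*q^4 - 5*q^2 + 1) * Kc q + (-8*q^4 + 8*q^2 - 1) * Ec q


noncomputable def gc (q : ℝ) : ℝ := 8 * (2 * Ec q - Kc q)^2 * (2*q^2 - 1)

open MeasureTheory Topology

/-! Write `u = 1 - q² sin² θ`. Differentiating under the integral sign, and integrating the
derivative of `q² sin θ cos θ / √u` over `[0, π/2]`, gives `E' = (E - K)/q` and
`K' = (E - (1 - q²) K)/(q (1 - q²))`. Hence `(2E - K)' = ((1 - q²)(E - K) - q² E)/(q (1 - q²)) < 0`,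
so `2E - K` changes sign only at `q*`, and `g' = 16 (2E - K) f / (q (1 - q²))`. On `[1/√2, q*]`,
where `2E ≥ K`, `f' = q ((20q² - 13) K - 20 (2q² - 1) E) ≤ -3qK < 0`, so there `f` changes sign
only at `q̂`; on `(q*, 1)` both `2E - K` and `f` are negative. The sign of `g'` on the three
intervals gives the monotonicity. -/

lemma abs_lt_one_of_mem_Ioo {q : ℝ} (hq : q ∈ Ioo (0:ℝ) 1) : |q| < 1 :=
  abs_lt.2 ⟨by linarith [hq.1], hq.2⟩

lemma half_lt_sq_of_inv_sqrt_two_lt {q : ℝ} (hq : 1 / √2 < q) : 1 / 2 < q^2 := by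
  simpa [div_pow] using pow_lt_pow_left₀ hq (by positivity) two_ne_zero

lemma strictMonoOn_of_hasDerivAt_pos {f f' : ℝ → ℝ} {s : Set ℝ} (hs : Convex ℝ s)
    (hf : ∀ x ∈ s, HasDerivAt f (f' x) x) (hf' : ∀ x ∈ interior s, 0 < f' x) :
    StrictMonoOn f s :=
  strictMonoOn_of_deriv_pos hs (fun x hx => (hf x hx).continuousAt.continuousWithinAt)
    fun x hx => (hf x (interior_subset hx)).deriv ▸ hf' x hx

lemma strictAntiOn_of_hasDerivAt_neg {f f' : ℝ → ℝ} {s : Set ℝ} (hs : Convex ℝ s)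
    (hf : ∀ x ∈ s, HasDerivAt f (f' x) x) (hf' : ∀ x ∈ interior s, f' x < 0) :
    StrictAntiOn f s :=
  strictAntiOn_of_deriv_neg hs (fun x hx => (hf x hx).continuousAt.continuousWithinAt)
    fun x hx => (hf x (interior_subset hx)).deriv ▸ hf' x hx

lemma one_sub_sq_pos_of_abs_lt_one {q : ℝ} (hq : |q| < 1) : 0 < 1 - q^2 :=
  sub_pos.2 ((sq_lt_one_iff_abs_lt_one q).2 hq)

lemma one_sub_sq_mul_sin_sq_pos {q : ℝ} (hq : |q| < 1) (θ : ℝ) : 0 < 1 - q^2 * sin θ^2 := by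
  nlinarith [one_sub_sq_pos_of_abs_lt_one hq,
    mul_le_mul_of_nonneg_left (sin_sq_le_one θ) (sq_nonneg q)]

lemma continuous_comp_one_sub_sq_mul_sin_sq {G : ℝ → ℝ} (hG : ContinuousOn G (Ioi 0)) {q : ℝ}
    (hq : |q| < 1) : Continuous fun θ => G (1 - q^2 * sin θ^2) :=
  hG.comp_continuous (by fun_prop) (one_sub_sq_mul_sin_sq_pos hq)

theorem hasDerivAt_integral_comp_one_sub_sq_mul_sin_sq {F F' : ℝ → ℝ}
    (hF : ∀ u, 0 < u → HasDerivAt F (F' u) u) (hF' : ContinuousOn F' (Ioi 0))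
    (a b : ℝ) {q : ℝ} (hq : |q| < 1) :
    HasDerivAt (fun p => ∫ θ in a..b, F (1 - p^2 * sin θ^2))
      (∫ θ in a..b, F' (1 - q^2 * sin θ^2) * -(2 * q * sin θ^2)) q := by
  obtain ⟨r, hqr, hr⟩ := exists_between hq
  have hnhds : Metric.ball q (r - |q|) ∈ 𝓝 q := Metric.ball_mem_nhds q (sub_pos.mpr hqr)
  have hball : ∀ x ∈ Metric.ball q (r - |q|), |x| < r := fun x hx => by
    rw [Metric.mem_ball, Real.dist_eq] at hx
    linarith [abs_sub_abs_le_abs_sub x q]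
  have hFc : ContinuousOn F (Ioi 0) := fun u hu => (hF u hu).continuousAt.continuousWithinAt
  obtain ⟨M, hM⟩ := isCompact_Icc.exists_bound_of_continuousOn
    (hF'.mono fun u (hu : u ∈ Icc (1 - r^2) 1) => show 0 < u by nlinarith [hu.1, abs_nonneg q])
  refine (intervalIntegral.hasDerivAt_integral_of_dominated_loc_of_deriv_le (μ := volume)
    (F := fun p θ => F (1 - p^2 * sin θ^2))
    (F' := fun p θ => F' (1 - p^2 * sin θ^2) * -(2 * p * sin θ^2)) (bound := fun _ => 2 * M)
    hnhds ?_ ?_ ?_ ?_ intervalIntegrable_const ?_).2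
  · filter_upwards [hnhds] with x hx
    exact (continuous_comp_one_sub_sq_mul_sin_sq hFc
      (by linarith [hball x hx])).aestronglyMeasurable
  · exact (continuous_comp_one_sub_sq_mul_sin_sq hFc hq).intervalIntegrable _ _
  · exact ((continuous_comp_one_sub_sq_mul_sin_sq hF' hq).mul (by fun_prop)).aestronglyMeasurable
  · refine ae_of_all _ fun θ _ x hx => ?_
    have hxr := hball x hx
    have hx2 : x^2 ≤ r^2 := by nlinarith [sq_abs x, abs_nonneg x]
    have hs := sin_sq_le_one θ
    have hu : 1 - x^2 * sin θ^2 ∈ Icc (1 - r^2) 1 := by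
      constructor <;> nlinarith [sq_nonneg x, sq_nonneg (sin θ)]
    have hx1 : |2 * x * sin θ^2| ≤ 2 := by
      rw [abs_mul, abs_mul, abs_two, abs_of_nonneg (sq_nonneg (sin θ))]
      nlinarith [abs_nonneg x, sq_nonneg (sin θ)]
    calc ‖F' (1 - x^2 * sin θ^2) * -(2 * x * sin θ^2)‖
        = ‖F' (1 - x^2 * sin θ^2)‖ * |2 * x * sin θ^2| := by
          rw [norm_mul, norm_neg, Real.norm_eq_abs (2 * x * _)]
      _ ≤ M * 2 := mul_le_mul (hM _ hu) hx1 (abs_nonneg _) ((norm_nonneg _).trans (hM _ hu))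
      _ = 2 * M := mul_comm M 2
  · refine ae_of_all _ fun θ _ x hx => ?_
    have hinner : HasDerivAt (fun p => 1 - p^2 * sin θ^2) (-(2 * x * sin θ^2)) x := by
      simpa using ((hasDerivAt_pow 2 x).mul_const (sin θ^2)).const_sub 1
    exact (hF _ (one_sub_sq_mul_sin_sq_pos (by linarith [hball x hx]) θ)).comp x hinner

-- Integrated over `[0, π/2]`, where the antiderivative vanishes at both ends, this evaluates
-- `∫ u^(-3/2)` in terms of `E`.
lemma hasDerivAt_sq_mul_sin_mul_cos_div_sqrt {q : ℝ} (hq : |q| < 1) (θ : ℝ) :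
    HasDerivAt (fun φ => q^2 * (sin φ * cos φ) / √(1 - q^2 * sin φ^2))
      ((q^2 - 1) * (1 / ((1 - q^2 * sin θ^2) * √(1 - q^2 * sin θ^2)))
        + √(1 - q^2 * sin θ^2)) θ := by
  have hu := one_sub_sq_mul_sin_sq_pos hq θ
  have hw : √(1 - q^2 * sin θ^2) ^ 2 = 1 - q^2 * sin θ^2 := sq_sqrt hu.le
  have hinner : HasDerivAt (fun φ => 1 - q^2 * sin φ^2) (-(q^2 * (2 * sin θ * cos θ))) θ := by
    simpa using (((hasDerivAt_sin θ).pow 2).const_mul (q^2)).const_sub 1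
  have h := (((hasDerivAt_sin θ).mul (hasDerivAt_cos θ)).const_mul (q^2)).div
    ((hasDerivAt_sqrt hu.ne').comp θ hinner) (sqrt_pos.2 hu).ne'
  refine h.congr_deriv ?_
  simp only [Function.comp_apply, Pi.mul_apply]
  field_simp
  rw [hw]
  linear_combination q^2 * (1 - q^2 * sin θ^2) * sin_sq_add_cos_sq θ

lemma continuous_sqrt_one_sub_sq_mul_sin_sq (q : ℝ) :
    Continuous fun θ => √(1 - q^2 * sin θ^2) := by
  fun_prop

lemma continuous_inv_sqrt_one_sub_sq_mul_sin_sq {q : ℝ} (hq : |q| < 1) :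
    Continuous fun θ => 1 / √(1 - q^2 * sin θ^2) :=
  continuous_comp_one_sub_sq_mul_sin_sq
    (continuousOn_const.div continuous_sqrt.continuousOn fun _ hu => (sqrt_pos.2 hu).ne') hq

lemma continuous_inv_mul_sqrt_one_sub_sq_mul_sin_sq {q : ℝ} (hq : |q| < 1) :
    Continuous fun θ => 1 / ((1 - q^2 * sin θ^2) * √(1 - q^2 * sin θ^2)) :=
  continuous_comp_one_sub_sq_mul_sin_sq
    (continuousOn_const.div (continuousOn_id.mul continuous_sqrt.continuousOn)
      fun _ hu => (mul_pos hu (sqrt_pos.2 hu)).ne') hq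

theorem integral_inv_mul_sqrt_one_sub_sq_mul_sin_sq {q : ℝ} (hq : |q| < 1) :
    ∫ θ in (0:ℝ)..π/2, 1 / ((1 - q^2 * sin θ^2) * √(1 - q^2 * sin θ^2)) = Ec q / (1 - q^2) := by
  have hJ := (continuous_inv_mul_sqrt_one_sub_sq_mul_sin_sq hq).intervalIntegrable
    (μ := volume) 0 (π/2)
  have hE := (continuous_sqrt_one_sub_sq_mul_sin_sq q).intervalIntegrable (μ := volume) 0 (π/2)
  have hFTC := intervalIntegral.integral_eq_sub_of_hasDerivAt
    (fun θ _ => hasDerivAt_sq_mul_sin_mul_cos_div_sqrt hq θ) ((hJ.const_mul (q^2 - 1)).add hE)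
  rw [intervalIntegral.integral_add (hJ.const_mul _) hE,
    intervalIntegral.integral_const_mul] at hFTC
  simp only [cos_pi_div_two, sin_zero, mul_zero, zero_mul, zero_div, sub_zero] at hFTC
  rw [eq_div_iff (one_sub_sq_pos_of_abs_lt_one hq).ne', Ec]
  linear_combination -hFTC

theorem hasDerivAt_Ec {q : ℝ} (hq0 : q ≠ 0) (hq : |q| < 1) :
    HasDerivAt Ec ((Ec q - Kc q) / q) q := by
  have h := hasDerivAt_integral_comp_one_sub_sq_mul_sin_sq (F := sqrt)
    (fun u hu => hasDerivAt_sqrt hu.ne')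
    (continuousOn_const.div (by fun_prop : Continuous fun u => 2 * √u).continuousOn
      fun u hu => (mul_pos two_pos (sqrt_pos.2 hu)).ne') 0 (π/2) hq
  refine h.congr_deriv ?_
  rw [Ec, Kc, ← intervalIntegral.integral_sub
    ((continuous_sqrt_one_sub_sq_mul_sin_sq q).intervalIntegrable _ _)
    ((continuous_inv_sqrt_one_sub_sq_mul_sin_sq hq).intervalIntegrable _ _),
    ← intervalIntegral.integral_div]
  refine intervalIntegral.integral_congr fun θ _ => ?_
  have hu := one_sub_sq_mul_sin_sq_pos hq θ
  have hw : √(1 - q^2 * sin θ^2) ^ 2 = 1 - q^2 * sin θ^2 := sq_sqrt hu.le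
  have := (sqrt_pos.2 hu).ne'
  field_simp
  linear_combination -hw

theorem hasDerivAt_Kc {q : ℝ} (hq0 : q ≠ 0) (hq : |q| < 1) :
    HasDerivAt Kc ((Ec q - (1 - q^2) * Kc q) / (q * (1 - q^2))) q := by
  have h := hasDerivAt_integral_comp_one_sub_sq_mul_sin_sq (F := fun u => 1 / √u)
    (F' := fun u => -1 / (2 * u * √u))
    (fun u hu => ((hasDerivAt_const u 1).div (hasDerivAt_sqrt hu.ne')
      (sqrt_pos.2 hu).ne').congr_deriv (by
        have hw := sq_sqrt hu.le
        have := (sqrt_pos.2 hu).ne'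
        field_simp
        linear_combination hw))
    (continuousOn_const.div (by fun_prop : Continuous fun u => 2 * u * √u).continuousOn
      fun u hu => (mul_pos (mul_pos two_pos hu) (sqrt_pos.2 hu)).ne') 0 (π/2) hq
  refine h.congr_deriv ?_
  rw [Kc, intervalIntegral.integral_congr (g := fun θ =>
      (1 / ((1 - q^2 * sin θ^2) * √(1 - q^2 * sin θ^2)) - 1 / √(1 - q^2 * sin θ^2)) / q),
    intervalIntegral.integral_div, intervalIntegral.integral_sub
      ((continuous_inv_mul_sqrt_one_sub_sq_mul_sin_sq hq).intervalIntegrable _ _)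
      ((continuous_inv_sqrt_one_sub_sq_mul_sin_sq hq).intervalIntegrable _ _),
    integral_inv_mul_sqrt_one_sub_sq_mul_sin_sq hq]
  · have := (one_sub_sq_pos_of_abs_lt_one hq).ne'
    field_simp
  · intro θ _
    have hu := one_sub_sq_mul_sin_sq_pos hq θ
    have := (sqrt_pos.2 hu).ne'
    field_simp
    ring

lemma Ec_pos {q : ℝ} (hq : |q| < 1) : 0 < Ec q :=
  intervalIntegral.intervalIntegral_pos_of_pos
    ((continuous_sqrt_one_sub_sq_mul_sin_sq q).intervalIntegrable _ _)
    (fun θ => sqrt_pos.2 (one_sub_sq_mul_sin_sq_pos hq θ)) (by positivity)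

lemma Kc_pos {q : ℝ} (hq : |q| < 1) : 0 < Kc q :=
  intervalIntegral.intervalIntegral_pos_of_pos
    ((continuous_inv_sqrt_one_sub_sq_mul_sin_sq hq).intervalIntegrable _ _)
    (fun θ => one_div_pos.2 (sqrt_pos.2 (one_sub_sq_mul_sin_sq_pos hq θ))) (by positivity)

lemma Ec_lt_Kc {q : ℝ} (hq0 : q ≠ 0) (hq : |q| < 1) : Ec q < Kc q := by
  have hK := (continuous_inv_sqrt_one_sub_sq_mul_sin_sq hq).intervalIntegrable
    (μ := volume) 0 (π/2)
  have hE := (continuous_sqrt_one_sub_sq_mul_sin_sq q).intervalIntegrable (μ := volume) 0 (π/2)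
  rw [← sub_pos, Kc, Ec, ← intervalIntegral.integral_sub hK hE]
  refine intervalIntegral.intervalIntegral_pos_of_pos_on (hK.sub hE) (fun θ hθ => ?_)
    (by positivity)
  have hu := one_sub_sq_mul_sin_sq_pos hq θ
  have hw : √(1 - q^2 * sin θ^2) ^ 2 = 1 - q^2 * sin θ^2 := sq_sqrt hu.le
  have hsin : 0 < sin θ := sin_pos_of_pos_of_lt_pi hθ.1 (by linarith [hθ.2, pi_pos])
  have hsqrt := sqrt_pos.2 hu
  have : 1 / √(1 - q^2 * sin θ^2) - √(1 - q^2 * sin θ^2)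
      = q^2 * sin θ^2 / √(1 - q^2 * sin θ^2) := by
    field_simp
    linear_combination -hw
  rw [this]
  positivity

lemma hasDerivAt_two_mul_Ec_sub_Kc {q : ℝ} (hq0 : q ≠ 0) (hq : |q| < 1) :
    HasDerivAt (fun p => 2 * Ec p - Kc p)
      (((1 - q^2) * (Ec q - Kc q) - q^2 * Ec q) / (q * (1 - q^2))) q := by
  have := (one_sub_sq_pos_of_abs_lt_one hq).ne'
  refine (((hasDerivAt_Ec hq0 hq).const_mul 2).sub (hasDerivAt_Kc hq0 hq)).congr_deriv ?_
  field_simp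
  ring

theorem strictAntiOn_two_mul_Ec_sub_Kc : StrictAntiOn (fun q => 2 * Ec q - Kc q) (Ioo 0 1) := by
  refine strictAntiOn_of_hasDerivAt_neg (convex_Ioo 0 1)
    (fun q hq => hasDerivAt_two_mul_Ec_sub_Kc hq.1.ne' (abs_lt_one_of_mem_Ioo hq)) fun q hq => ?_
  rw [interior_Ioo] at hq
  have hq2 := one_sub_sq_pos_of_abs_lt_one (abs_lt_one_of_mem_Ioo hq)
  have hEK := Ec_lt_Kc hq.1.ne' (abs_lt_one_of_mem_Ioo hq)
  have hE := Ec_pos (abs_lt_one_of_mem_Ioo hq)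
  exact div_neg_of_neg_of_pos (by nlinarith) (mul_pos hq.1 hq2)

lemma two_mul_Ec_sub_Kc_pos_iff {q qstar : ℝ} (hq : q ∈ Ioo (0:ℝ) 1) (hqs : qstar ∈ Ioo (0:ℝ) 1)
    (hqs0 : 2 * Ec qstar = Kc qstar) : 0 < 2 * Ec q - Kc q ↔ q < qstar := by
  simpa [hqs0] using strictAntiOn_two_mul_Ec_sub_Kc.lt_iff_gt hqs hq

lemma two_mul_Ec_sub_Kc_neg_iff {q qstar : ℝ} (hq : q ∈ Ioo (0:ℝ) 1) (hqs : qstar ∈ Ioo (0:ℝ) 1)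
    (hqs0 : 2 * Ec qstar = Kc qstar) : 2 * Ec q - Kc q < 0 ↔ qstar < q := by
  simpa [hqs0] using strictAntiOn_two_mul_Ec_sub_Kc.lt_iff_gt hq hqs

theorem hasDerivAt_fc {q : ℝ} (hq0 : q ≠ 0) (hq : |q| < 1) :
    HasDerivAt fc (q * ((20*q^2 - 13) * Kc q - 20 * (2*q^2 - 1) * Ec q)) q := by
  have hA : HasDerivAt (fun p => 4*p^4 - 5*p^2 + 1) (16*q^3 - 10*q) q := by
    refine ((((hasDerivAt_pow 4 q).const_mul 4).sub
      ((hasDerivAt_pow 2 q).const_mul 5)).add_const 1).congr_deriv ?_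
    norm_num
    ring
  have hB : HasDerivAt (fun p => -8*p^4 + 8*p^2 - 1) (-32*q^3 + 16*q) q := by
    refine ((((hasDerivAt_pow 4 q).const_mul (-8)).add
      ((hasDerivAt_pow 2 q).const_mul 8)).sub_const 1).congr_deriv ?_
    norm_num
    ring
  have := (one_sub_sq_pos_of_abs_lt_one hq).ne'
  refine ((hA.mul (hasDerivAt_Kc hq0 hq)).add (hB.mul (hasDerivAt_Ec hq0 hq))).congr_deriv ?_
  field_simp
  ring

theorem hasDerivAt_gc {q : ℝ} (hq0 : q ≠ 0) (hq : |q| < 1) :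
    HasDerivAt gc (16 * ((2 * Ec q - Kc q) * fc q) / (q * (1 - q^2))) q := by
  have hB : HasDerivAt (fun p => 2*p^2 - 1) (4*q) q := by
    refine (((hasDerivAt_pow 2 q).const_mul 2).sub_const 1).congr_deriv ?_
    norm_num
    ring
  have := (one_sub_sq_pos_of_abs_lt_one hq).ne'
  refine ((((hasDerivAt_two_mul_Ec_sub_Kc hq0 hq).pow 2).const_mul 8).mul hB).congr_deriv ?_
  simp only [fc, Pi.pow_apply]
  field_simp
  ring

theorem strictAntiOn_fc {qstar : ℝ} (hqs : qstar ∈ Ioo (0:ℝ) 1)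
    (hqs0 : 2 * Ec qstar = Kc qstar) :
    StrictAntiOn fc (Icc (1 / √2) qstar) := by
  have hsub : Icc (1 / √2) qstar ⊆ Ioo 0 1 := fun q hq =>
    ⟨lt_of_lt_of_le (by positivity) hq.1, hq.2.trans_lt hqs.2⟩
  refine strictAntiOn_of_hasDerivAt_neg (convex_Icc _ _)
    (fun q hq => hasDerivAt_fc (hsub hq).1.ne' (abs_lt_one_of_mem_Ioo (hsub hq))) fun q hq => ?_
  have hq01 := hsub (interior_subset hq)
  rw [interior_Icc] at hq
  have hq2 := half_lt_sq_of_inv_sqrt_two_lt hq.1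
  have hh := (two_mul_Ec_sub_Kc_pos_iff hq01 hqs hqs0).2 hq.2
  have hK := Kc_pos (abs_lt_one_of_mem_Ioo hq01)
  -- `2E > K` and `2q² > 1` bound the bracket by `(20q² - 13) K - 10 (2q² - 1) K = -3K`
  exact mul_neg_of_pos_of_neg hq01.1 (by nlinarith [mul_pos (by linarith : 0 < 2*q^2 - 1) hh])

lemma fc_neg_of_two_mul_Ec_lt_Kc {q : ℝ} (hq : |q| < 1) (hq2 : 1 / 2 < q^2)
    (h : 2 * Ec q < Kc q) : fc q < 0 := by
  have hK := Kc_pos hq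
  have hE := Ec_pos hq
  have hq1 : q^2 < 1 := (sq_lt_one_iff_abs_lt_one q).2 hq
  rw [fc]
  -- if `-8q⁴ + 8q² - 1 ≥ 0`, replacing `E` by `K/2` leaves `(1/2 - q²) K`;
  -- otherwise both coefficients are negative
  rcases le_or_gt 0 (-8*q^4 + 8*q^2 - 1) with hB | hB
  · nlinarith [mul_nonneg hB (by linarith : (0:ℝ) ≤ Kc q - 2 * Ec q)]
  · have hA : 4*q^4 - 5*q^2 + 1 < 0 := by nlinarith
    nlinarith [mul_pos_of_neg_of_neg hA (neg_neg_of_pos hK),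
      mul_pos_of_neg_of_neg hB (neg_neg_of_pos hE)]

lemma strictMonoOn_gc_of_pos {s : Set ℝ} (hs : Convex ℝ s) (hs01 : s ⊆ Ioo 0 1)
    (hpos : ∀ q ∈ interior s, 0 < (2 * Ec q - Kc q) * fc q) : StrictMonoOn gc s :=
  strictMonoOn_of_hasDerivAt_pos hs
    (fun q hq => hasDerivAt_gc (hs01 hq).1.ne' (abs_lt_one_of_mem_Ioo (hs01 hq))) fun q hq =>
    have hq01 := hs01 (interior_subset hq)
    div_pos (mul_pos (by norm_num) (hpos q hq))
      (mul_pos hq01.1 (one_sub_sq_pos_of_abs_lt_one (abs_lt_one_of_mem_Ioo hq01)))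

lemma strictAntiOn_gc_of_neg {s : Set ℝ} (hs : Convex ℝ s) (hs01 : s ⊆ Ioo 0 1)
    (hneg : ∀ q ∈ interior s, (2 * Ec q - Kc q) * fc q < 0) : StrictAntiOn gc s :=
  strictAntiOn_of_hasDerivAt_neg hs
    (fun q hq => hasDerivAt_gc (hs01 hq).1.ne' (abs_lt_one_of_mem_Ioo (hs01 hq))) fun q hq =>
    have hq01 := hs01 (interior_subset hq)
    div_neg_of_neg_of_pos (mul_neg_of_pos_of_neg (by norm_num) (hneg q hq))
      (mul_pos hq01.1 (one_sub_sq_pos_of_abs_lt_one (abs_lt_one_of_mem_Ioo hq01)))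

theorem stmt_12 (qstar : ℝ) (hqs : qstar ∈ Ioo (0:ℝ) 1) (hqs0 : 2 * Ec qstar = Kc qstar)
    (qhat : ℝ) (hqh : qhat ∈ Ioo (1 / Real.sqrt 2) qstar) (hqh0 : fc qhat = 0) :
    StrictMonoOn gc (Ioc (1 / Real.sqrt 2) qhat) ∧
    StrictAntiOn gc (Icc qhat qstar) ∧
    StrictMonoOn gc (Ico qstar 1) ∧
    IsLocalMax gc qhat ∧ gc qstar = 0 := by
  have hinv : (0:ℝ) < 1 / √2 := by positivity
  have mem01 : ∀ {q}, 1 / √2 < q → q < 1 → q ∈ Ioo (0:ℝ) 1 := fun h1 h2 => ⟨hinv.trans h1, h2⟩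
  have hh_pos : ∀ {q}, 1 / √2 < q → q < qstar → 0 < 2 * Ec q - Kc q := fun h1 h2 =>
    (two_mul_Ec_sub_Kc_pos_iff (mem01 h1 (h2.trans hqs.2)) hqs hqs0).2 h2
  have hf_pos : ∀ {q}, 1 / √2 < q → q < qhat → 0 < fc q := fun h1 h2 =>
    hqh0 ▸ strictAntiOn_fc hqs hqs0 ⟨h1.le, (h2.trans hqh.2).le⟩ ⟨hqh.1.le, hqh.2.le⟩ h2
  have hf_neg : ∀ {q}, qhat < q → q ≤ qstar → fc q < 0 := fun h1 h2 =>
    hqh0 ▸ strictAntiOn_fc hqs hqs0 ⟨hqh.1.le, hqh.2.le⟩ ⟨(hqh.1.trans h1).le, h2⟩ h1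
  have hmono : StrictMonoOn gc (Ioc (1 / √2) qhat) :=
    strictMonoOn_gc_of_pos (convex_Ioc _ _)
      (fun q hq => mem01 hq.1 (hq.2.trans_lt (hqh.2.trans hqs.2))) fun q hq => by
        rw [interior_Ioc] at hq
        exact mul_pos (hh_pos hq.1 (hq.2.trans hqh.2)) (hf_pos hq.1 hq.2)
  have hanti : StrictAntiOn gc (Icc qhat qstar) :=
    strictAntiOn_gc_of_neg (convex_Icc _ _)
      (fun q hq => mem01 (hqh.1.trans_le hq.1) (hq.2.trans_lt hqs.2)) fun q hq => by
        rw [interior_Icc] at hq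
        exact mul_neg_of_pos_of_neg (hh_pos (hqh.1.trans hq.1) hq.2) (hf_neg hq.1 hq.2.le)
  have hmono' : StrictMonoOn gc (Ico qstar 1) :=
    strictMonoOn_gc_of_pos (convex_Ico _ _)
      (fun q hq => mem01 ((hqh.1.trans hqh.2).trans_le hq.1) hq.2) fun q hq => by
        rw [interior_Ico] at hq
        have hq01 := mem01 ((hqh.1.trans hqh.2).trans hq.1) hq.2
        have hh := (two_mul_Ec_sub_Kc_neg_iff hq01 hqs hqs0).2 hq.1
        exact mul_pos_of_neg_of_neg hh (fc_neg_of_two_mul_Ec_lt_Kc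
          (abs_lt_one_of_mem_Ioo hq01)
          (half_lt_sq_of_inv_sqrt_two_lt ((hqh.1.trans hqh.2).trans hq.1)) (by linarith))
  refine ⟨hmono, hanti, hmono', isLocalMax_of_mono_anti hqh.1 hqh.2 hmono.monotoneOn
    (hanti.antitoneOn.mono Ico_subset_Icc_self), by simp [gc, hqs0]⟩
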